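/- Correctness of forward-mode AD for integer powers: let g : ℝ^N → ℝ be twice continuously differentiable at a ∈ ℝ^N, n ≥ 1 a natural number, and T_a(h) = (h(a), ∇h(a), Hess h(a)) ∈ D2(N). Then T_a(gⁿ) = (T_a(g))ⁿ in D2(N); in particular ∇(gⁿ)(a) = n·g(a)^{n−1}·∇g(a) and Hess(gⁿ)(a) = n(n−1)·g(a)^{n−2}·∇g(a)∇g(a)ᵀ + n·g(a)^{n−1}·Hess g(a). -/

import Mathlib

/-- Second-order dual numbers of dimension `N`: a value, a gradient part, and a Hessian part. -/
abbrev D2 (N : ℕ) : Type := ℝ × (Fin N → ℝ) × Matrix (Fin N) (Fin N) ℝ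

/-- Multiplication of second-order dual numbers. -/
noncomputable def D2.mul {N : ℕ} (x y : D2 N) : D2 N :=
  (x.1 * y.1,
   x.1 • y.2.1 + y.1 • x.2.1,
   y.1 • x.2.2 + x.1 • y.2.2 + Matrix.vecMulVec x.2.1 y.2.1 + Matrix.vecMulVec y.2.1 x.2.1)

/-- The unit element `(1, 0, 0)`. -/
noncomputable def D2.one (N : ℕ) : D2 N := (1, 0, 0)

/-- Powers of a second-order dual number, by iterated multiplication. -/
noncomputable def D2.npow {N : ℕ} (x : D2 N) : ℕ → D2 N
  | 0 => D2.one N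
  | n + 1 => D2.mul (D2.npow x n) x

/-- The gradient of a scalar function on `ℝ^N`. -/
noncomputable def grad {N : ℕ} (h : (Fin N → ℝ) → ℝ) (a : Fin N → ℝ) : Fin N → ℝ :=
  fun i => fderiv ℝ h a (Pi.single i 1)

/-- The Hessian matrix of a scalar function on `ℝ^N`. -/
noncomputable def hess {N : ℕ} (h : (Fin N → ℝ) → ℝ) (a : Fin N → ℝ) :
    Matrix (Fin N) (Fin N) ℝ :=
  Matrix.of fun i j => fderiv ℝ (fun x => fderiv ℝ h x (Pi.single j 1)) a (Pi.single i 1)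

/-- The second-order dual lift `T_a(h) = (h(a), ∇h(a), Hess h(a))`. -/
noncomputable def dualLift {N : ℕ} (h : (Fin N → ℝ) → ℝ) (a : Fin N → ℝ) : D2 N :=
  (h a, grad h a, hess h a)

/-!
Products lift to products: the Leibniz rules for the gradient and the Hessian are exactly the
multiplication of `D2 N`, so `T_a(gⁿ) = (T_a g)ⁿ` by induction on `n`. The closed form of
`(v, d, H)ⁿ` follows by a second induction; the truncated exponents `n - 1` and `n - 2` do no
harm for small `n` because their coefficients `n` and `n (n - 1)` vanish there.
-/

section SecondDerivative

variable {E : Type*} [NormedAddCommGroup E] [NormedSpace ℝ E] {f g : E → ℝ} {a : E}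

theorem ContDiffAt.differentiableAt_fderiv_apply (hf : ContDiffAt ℝ 2 f a) (v : E) :
    DifferentiableAt ℝ (fun x => fderiv ℝ f x v) a :=
  ((hf.fderiv_right (m := 1) (by norm_num)).differentiableAt one_ne_zero).clm_apply
    (differentiableAt_const v)

theorem fderiv_fderiv_mul_apply (hf : ContDiffAt ℝ 2 f a) (hg : ContDiffAt ℝ 2 g a) (u v : E) :
    fderiv ℝ (fun x => fderiv ℝ (fun y => f y * g y) x v) a u =
      f a * fderiv ℝ (fun x => fderiv ℝ g x v) a u + g a * fderiv ℝ (fun x => fderiv ℝ f x v) a u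
        + fderiv ℝ f a u * fderiv ℝ g a v + fderiv ℝ g a u * fderiv ℝ f a v := by
  have hleibniz : (fun x => fderiv ℝ (fun y => f y * g y) x v) =ᶠ[nhds a]
      fun x => f x * fderiv ℝ g x v + g x * fderiv ℝ f x v := by
    filter_upwards [hf.eventually (by norm_num), hg.eventually (by norm_num)] with x hfx hgx
    simp [fderiv_fun_mul (hfx.differentiableAt two_ne_zero) (hgx.differentiableAt two_ne_zero)]
  have hfa := hf.differentiableAt two_ne_zero
  have hga := hg.differentiableAt two_ne_zero
  have hf' := hf.differentiableAt_fderiv_apply v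
  have hg' := hg.differentiableAt_fderiv_apply v
  rw [hleibniz.fderiv_eq, fderiv_fun_add (hfa.fun_mul hg') (hga.fun_mul hf'),
    fderiv_fun_mul hfa hg', fderiv_fun_mul hga hf']
  simp only [add_apply, smul_apply, smul_eq_mul]
  ring

end SecondDerivative

section DualLift

variable {N : ℕ} {f g : (Fin N → ℝ) → ℝ} {a : Fin N → ℝ}

theorem grad_mul (hf : DifferentiableAt ℝ f a) (hg : DifferentiableAt ℝ g a) :
    grad (fun x => f x * g x) a = f a • grad g a + g a • grad f a := by
  funext i
  simp [grad, fderiv_fun_mul hf hg]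

theorem hess_mul (hf : ContDiffAt ℝ 2 f a) (hg : ContDiffAt ℝ 2 g a) :
    hess (fun x => f x * g x) a =
      g a • hess f a + f a • hess g a + Matrix.vecMulVec (grad f a) (grad g a)
        + Matrix.vecMulVec (grad g a) (grad f a) := by
  ext i j
  simp only [hess, grad, Matrix.of_apply, Matrix.add_apply, Matrix.smul_apply,
    Matrix.vecMulVec_apply, smul_eq_mul, fderiv_fderiv_mul_apply hf hg]
  ring

theorem dualLift_mul (hf : ContDiffAt ℝ 2 f a) (hg : ContDiffAt ℝ 2 g a) :
    dualLift (fun x => f x * g x) a = D2.mul (dualLift f a) (dualLift g a) := by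
  refine Prod.ext rfl (Prod.ext ?_ ?_)
  · exact grad_mul (hf.differentiableAt two_ne_zero) (hg.differentiableAt two_ne_zero)
  · exact hess_mul hf hg

theorem dualLift_const (c : ℝ) (a : Fin N → ℝ) :
    dualLift (fun _ : Fin N → ℝ => c) a = (c, 0, 0) := by
  refine Prod.ext rfl (Prod.ext ?_ ?_)
  · funext i
    simp [dualLift, grad]
  · ext i j
    simp [dualLift, hess]

theorem dualLift_pow_eq_npow (hg : ContDiffAt ℝ 2 g a) (n : ℕ) :
    dualLift (fun x => g x ^ n) a = D2.npow (dualLift g a) n := by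
  induction n with
  | zero => simpa [D2.npow, D2.one] using dualLift_const 1 a
  | succ n ih =>
    simp only [pow_succ]
    rw [dualLift_mul (hg.pow n) hg, ih, D2.npow]

end DualLift

section PowerFormula

variable {R : Type*} [CommRing R]

theorem natCast_mul_pow_pred_mul (n : ℕ) (v : R) : (n : R) * v ^ (n - 1) * v = n * v ^ n := by
  rcases n with _ | n
  · simp
  · simp [mul_assoc, pow_succ]

theorem natCast_mul_sub_one_mul_pow_sub_two_mul (n : ℕ) (v : R) :
    (n : R) * (n - 1) * v ^ (n - 2) * v = n * (n - 1) * v ^ (n - 1) := by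
  rcases n with _ | _ | n
  · simp
  · simp
  · simp [mul_assoc, pow_succ]

end PowerFormula

theorem D2.npow_eq {N : ℕ} (v : ℝ) (d : Fin N → ℝ) (H : Matrix (Fin N) (Fin N) ℝ) (n : ℕ) :
    D2.npow ((v, d, H) : D2 N) n =
      (v ^ n, ((n : ℝ) * v ^ (n - 1)) • d,
        ((n : ℝ) * ((n : ℝ) - 1) * v ^ (n - 2)) • Matrix.vecMulVec d d
          + ((n : ℝ) * v ^ (n - 1)) • H) := by
  induction n with
  | zero => simp [D2.npow, D2.one]
  | succ n ih =>
    rw [D2.npow, ih]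
    refine Prod.ext (pow_succ v n).symm (Prod.ext ?_ ?_)
    · funext i
      simp only [D2.mul, Pi.add_apply, Pi.smul_apply, smul_eq_mul, Nat.add_sub_cancel]
      push_cast
      linear_combination d i * natCast_mul_pow_pred_mul n v
    · ext i j
      simp only [D2.mul, Matrix.add_apply, Matrix.smul_apply, Matrix.vecMulVec_apply,
        Pi.smul_apply, smul_eq_mul, Nat.add_sub_cancel]
      push_cast
      linear_combination d i * d j * natCast_mul_sub_one_mul_pow_sub_two_mul n v
        + H i j * natCast_mul_pow_pred_mul n v

theorem dualLift_pow_general {N : ℕ} (g : (Fin N → ℝ) → ℝ) (a : Fin N → ℝ)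
    (hg : ContDiffAt ℝ 2 g a) (n : ℕ) :
    dualLift (fun x => g x ^ n) a = D2.npow (dualLift g a) n ∧
    grad (fun x => g x ^ n) a = ((n : ℝ) * g a ^ (n - 1)) • grad g a ∧
    hess (fun x => g x ^ n) a =
      ((n : ℝ) * ((n : ℝ) - 1) * g a ^ (n - 2)) • Matrix.vecMulVec (grad g a) (grad g a)
        + ((n : ℝ) * g a ^ (n - 1)) • hess g a := by
  have hlift := dualLift_pow_eq_npow hg n
  have hclosed := hlift.trans (D2.npow_eq (g a) (grad g a) (hess g a) n)
  exact ⟨hlift, congrArg (fun p : D2 N => p.2.1) hclosed, congrArg (fun p : D2 N => p.2.2) hclosed⟩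

/-- Correctness of forward-mode AD for integer powers: `T_a(gⁿ) = (T_a(g))ⁿ` in `D2 N`,
with the explicit power formulas for the gradient and the Hessian. -/
theorem dualLift_pow {N : ℕ} (g : (Fin N → ℝ) → ℝ) (a : Fin N → ℝ)
    (hg : ContDiffAt ℝ 2 g a) (n : ℕ) (hn : 1 ≤ n) :
    dualLift (fun x => g x ^ n) a = D2.npow (dualLift g a) n ∧
    grad (fun x => g x ^ n) a = ((n : ℝ) * g a ^ (n - 1)) • grad g a ∧
    hess (fun x => g x ^ n) a =
      ((n : ℝ) * ((n : ℝ) - 1) * g a ^ (n - 2)) • Matrix.vecMulVec (grad g a) (grad g a)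
        + ((n : ℝ) * g a ^ (n - 1)) • hess g a :=
  dualLift_pow_general g a hg n
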